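/- Mixed states ρ₁, …, ρ_m can be unambiguously discriminated (i.e., there exist positive semidefinite operators Π₁,…,Π_m with Σ_{i=1}^m Π_i ≤ I, Tr(Π_i ρ_j) = 0 for i ≠ j, and Tr(Π_i ρ_i) > 0 for all i) if and only if for every i the core ρ̃_i is nonzero, equivalently supp(ρ_i) ⊄ Σ_{j≠i} supp(ρ_j). -/

import Mathlib

open Matrix BigOperators ComplexOrder

/-- Support of a matrix (for a PSD matrix, the orthocomplement of its kernel). -/
noncomputable def supp {n : ℕ} (A : Matrix (Fin n) (Fin n) ℂ) : Submodule ℂ (Fin n → ℂ) :=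
  LinearMap.range A.mulVecLin

namespace UDHelper

variable {n : ℕ}

noncomputable def eE {n : ℕ} : (Fin n → ℂ) ≃ₗ[ℂ] EuclideanSpace ℂ (Fin n) :=
  (WithLp.linearEquiv 2 ℂ (Fin n → ℂ)).symm

noncomputable def mE {n : ℕ} (U : Submodule ℂ (Fin n → ℂ)) :
    Submodule ℂ (EuclideanSpace ℂ (Fin n)) :=
  U.map ((eE : (Fin n → ℂ) ≃ₗ[ℂ] EuclideanSpace ℂ (Fin n)) : (Fin n → ℂ) →ₗ[ℂ] EuclideanSpace ℂ (Fin n))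

lemma mE_le_mE {U V : Submodule ℂ (Fin n → ℂ)} : mE U ≤ mE V ↔ U ≤ V :=
  Submodule.map_le_map_iff_of_injective (eE.injective) U V

lemma mE_mono {U V : Submodule ℂ (Fin n → ℂ)} (h : U ≤ V) : mE U ≤ mE V :=
  mE_le_mE.mpr h

lemma mE_supp (A : Matrix (Fin n) (Fin n) ℂ) :
    mE (supp A) = LinearMap.range (Matrix.toEuclideanLin A) := by
  ext x
  constructor
  · rintro ⟨y, ⟨z, rfl⟩, rfl⟩
    exact ⟨eE z, rfl⟩
  · rintro ⟨z, rfl⟩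
    exact ⟨A.mulVec (eE.symm z), ⟨eE.symm z, rfl⟩, rfl⟩

lemma mE_biSup {ι : Type*} (s : Finset ι) (f : ι → Submodule ℂ (Fin n → ℂ)) :
    mE (⨆ j ∈ s, f j) = ⨆ j ∈ s, mE (f j) := by
  simp only [mE, Submodule.map_iSup]

lemma mem_mE {U : Submodule ℂ (Fin n → ℂ)} {x : Fin n → ℂ} : eE x ∈ mE U ↔ x ∈ U := by
  constructor
  · rintro ⟨y, hy, h⟩
    rwa [← eE.injective h]
  · intro h; exact ⟨x, h, rfl⟩

lemma toE_mul (A B : Matrix (Fin n) (Fin n) ℂ) :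
    Matrix.toEuclideanLin (A * B) =
      (Matrix.toEuclideanLin A).comp (Matrix.toEuclideanLin B) := by
  apply LinearMap.ext
  intro x
  show eE ((A * B).mulVec (eE.symm x)) = eE (A.mulVec (B.mulVec (eE.symm x)))
  rw [← Matrix.mulVec_mulVec]

lemma mul_eq_zero_of_range_le_ker {A B : Matrix (Fin n) (Fin n) ℂ}
    (h : LinearMap.range (Matrix.toEuclideanLin B) ≤ LinearMap.ker (Matrix.toEuclideanLin A)) :
    A * B = 0 := by
  have h0 : Matrix.toEuclideanLin (A * B) = 0 := by
    rw [toE_mul]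
    apply LinearMap.ext
    intro x
    exact h ⟨x, rfl⟩
  exact (LinearEquiv.map_eq_zero_iff Matrix.toEuclideanLin).mp h0

lemma range_le_ker_of_mul_eq_zero {A B : Matrix (Fin n) (Fin n) ℂ} (h : A * B = 0) :
    LinearMap.range (Matrix.toEuclideanLin B) ≤ LinearMap.ker (Matrix.toEuclideanLin A) := by
  rintro _ ⟨x, rfl⟩
  show Matrix.toEuclideanLin A (Matrix.toEuclideanLin B x) = 0
  rw [← LinearMap.comp_apply, ← toE_mul, h]
  simp

lemma range_toE_hermitian {A : Matrix (Fin n) (Fin n) ℂ} (hA : A.IsHermitian) :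
    LinearMap.range (Matrix.toEuclideanLin A) =
      (LinearMap.ker (Matrix.toEuclideanLin A))ᗮ := by
  set T := Matrix.toEuclideanLin A with hT
  have hs : T.IsSymmetric := Matrix.isHermitian_iff_isSymmetric.mp hA
  have h1 : (LinearMap.range T)ᗮ = LinearMap.ker T := by
    ext x
    constructor
    · intro h
      have h2 := h (T (T x)) ⟨T x, rfl⟩
      rw [hs (T x) x] at h2
      exact LinearMap.mem_ker.mpr (inner_self_eq_zero.mp h2)
    · intro h u hu
      obtain ⟨v, rfl⟩ := hu
      rw [hs v x, LinearMap.mem_ker.mp h, inner_zero_right]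
  rw [← h1, Submodule.orthogonal_orthogonal]

lemma supp_eq_bot {A : Matrix (Fin n) (Fin n) ℂ} : supp A = ⊥ ↔ A = 0 := by
  constructor
  · intro h
    ext i j
    have hj : A.mulVec (Pi.single j 1) ∈ (⊥ : Submodule ℂ (Fin n → ℂ)) := by
      rw [← h]; exact ⟨Pi.single j 1, rfl⟩
    have := congrFun (Submodule.mem_bot ℂ |>.mp hj) i
    simpa [Matrix.mulVec_single] using this
  · intro h; subst h
    simp [supp]

lemma psd_add_ker {A B : Matrix (Fin n) (Fin n) ℂ} (hA : A.PosSemidef) (hB : B.PosSemidef) :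
    LinearMap.ker (Matrix.toEuclideanLin (A + B)) ≤ LinearMap.ker (Matrix.toEuclideanLin B) := by
  intro x hx
  have hx' : (A + B).mulVec (eE.symm x) = 0 := by
    have := LinearMap.mem_ker.mp hx
    exact congrArg eE.symm this
  have hdot : star (eE.symm x) ⬝ᵥ A.mulVec (eE.symm x)
      + star (eE.symm x) ⬝ᵥ B.mulVec (eE.symm x) = 0 := by
    rw [← dotProduct_add, ← Matrix.add_mulVec, hx', dotProduct_zero]
  have h1 := (posSemidef_iff_dotProduct_mulVec.mp hA).2 (eE.symm x)
  have h2 := (posSemidef_iff_dotProduct_mulVec.mp hB).2 (eE.symm x)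
  have hB0 : star (eE.symm x) ⬝ᵥ B.mulVec (eE.symm x) = 0 :=
    ((add_eq_zero_iff_of_nonneg h1 h2).mp hdot).2
  have := (hB.dotProduct_mulVec_zero_iff (eE.symm x)).mp hB0
  show Matrix.toEuclideanLin B x = 0
  have : eE (B.mulVec (eE.symm x)) = eE 0 := congrArg eE this
  exact this.trans (map_zero eE)

lemma le_supp_add {A B : Matrix (Fin n) (Fin n) ℂ} (hA : A.PosSemidef) (hB : B.PosSemidef) :
    supp B ≤ supp (A + B) := by
  rw [← mE_le_mE, mE_supp, mE_supp, range_toE_hermitian hB.1,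
    range_toE_hermitian (hA.add hB).1]
  exact Submodule.orthogonal_le (psd_add_ker hA hB)

/-- Trace of a product of PSD matrices is nonneg, and zero iff the product vanishes. -/
lemma trace_psd_mul {A B : Matrix (Fin n) (Fin n) ℂ} (hA : A.PosSemidef) (hB : B.PosSemidef) :
    0 ≤ (A * B).trace ∧ ((A * B).trace = 0 → A * B = 0) := by
  obtain ⟨C, hC, hCA⟩ : ∃ C : Matrix (Fin n) (Fin n) ℂ, C.IsHermitian ∧ C * C = A := by
    open scoped MatrixOrder in
    exact ⟨CFC.sqrt A, (CFC.sqrt_nonneg A).posSemidef.1, CFC.sqrt_mul_sqrt_self A hA.nonneg⟩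
  obtain ⟨D, hD, hDB⟩ : ∃ D : Matrix (Fin n) (Fin n) ℂ, D.IsHermitian ∧ D * D = B := by
    open scoped MatrixOrder in
    exact ⟨CFC.sqrt B, (CFC.sqrt_nonneg B).posSemidef.1, CFC.sqrt_mul_sqrt_self B hB.nonneg⟩
  set M := D * C with hM
  have hMH : Mᴴ = C * D := by rw [hM, conjTranspose_mul, hC.eq, hD.eq]
  have htr : (A * B).trace = (M * Mᴴ).trace := by
    rw [hMH, hM, ← hCA, ← hDB]
    rw [show C * C * (D * D) = (C * C * D) * D by noncomm_ring,
      Matrix.trace_mul_comm, show D * (C * C * D) = D * C * (C * D) by noncomm_ring]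
  have hdiag : (M * Mᴴ).trace = ∑ i, ∑ j, ((Complex.normSq (M i j) : ℝ) : ℂ) := by
    simp [Matrix.trace, Matrix.mul_apply, Matrix.conjTranspose_apply, Matrix.diag,
      Complex.mul_conj]
  have hnn : ∀ i ∈ (Finset.univ : Finset (Fin n)),
      (0:ℂ) ≤ ∑ j, ((Complex.normSq (M i j) : ℝ) : ℂ) := by
    intro i _
    exact Finset.sum_nonneg fun j _ => Complex.zero_le_real.mpr (Complex.normSq_nonneg _)
  constructor
  · rw [htr, hdiag]
    exact Finset.sum_nonneg hnn
  · intro h0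
    rw [htr, hdiag] at h0
    have hM0 : M = 0 := by
      ext i j
      have hrow := (Finset.sum_eq_zero_iff_of_nonneg hnn).mp h0 i (Finset.mem_univ i)
      have hentry := (Finset.sum_eq_zero_iff_of_nonneg
        (fun j _ => Complex.zero_le_real.mpr (Complex.normSq_nonneg (M i j)))).mp
        hrow j (Finset.mem_univ j)
      have : Complex.normSq (M i j) = 0 := by exact_mod_cast hentry
      simpa using Complex.normSq_eq_zero.mp this
    have hMH0 : C * D = 0 := by rw [← hMH, hM0, conjTranspose_zero]
    rw [← hCA, ← hDB, show C * C * (D * D) = C * (C * D) * D by noncomm_ring, hMH0]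
    simp

lemma pos_re_of_nonneg_ne_zero {t : ℂ} (h1 : 0 ≤ t) (h2 : t ≠ 0) : 0 < t.re := by
  rw [Complex.le_def] at h1
  rcases lt_or_eq_of_le h1.1 with h | h
  · simpa using h
  · exfalso; apply h2; apply Complex.ext <;> simp [← h, ← h1.2]

end UDHelper

namespace UDHelper

variable {n : ℕ}

noncomputable def projM (U : Submodule ℂ (EuclideanSpace ℂ (Fin n))) :
    Matrix (Fin n) (Fin n) ℂ :=
  Matrix.toEuclideanLin.symm
    ((U.subtypeL.comp (U.orthogonalProjection) :
      EuclideanSpace ℂ (Fin n) →L[ℂ] EuclideanSpace ℂ (Fin n)) :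
      EuclideanSpace ℂ (Fin n) →ₗ[ℂ] EuclideanSpace ℂ (Fin n))

lemma toE_projM (U : Submodule ℂ (EuclideanSpace ℂ (Fin n))) :
    Matrix.toEuclideanLin (projM U) =
      ((U.subtypeL.comp (U.orthogonalProjection) :
      EuclideanSpace ℂ (Fin n) →L[ℂ] EuclideanSpace ℂ (Fin n)) :
      EuclideanSpace ℂ (Fin n) →ₗ[ℂ] EuclideanSpace ℂ (Fin n)) :=
  LinearEquiv.apply_symm_apply _ _

lemma dot_eq_inner (M : Matrix (Fin n) (Fin n) ℂ) (x : Fin n → ℂ) :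
    star x ⬝ᵥ M *ᵥ x = inner (𝕜 := ℂ) (eE x) (Matrix.toEuclideanLin M (eE x)) := by
  simp [PiLp.inner_apply, dotProduct, eE, mul_comm]

lemma projM_idem (U : Submodule ℂ (EuclideanSpace ℂ (Fin n)))
    (y : EuclideanSpace ℂ (Fin n)) :
    Matrix.toEuclideanLin (projM U) (Matrix.toEuclideanLin (projM U) y) =
      Matrix.toEuclideanLin (projM U) y := by
  rw [toE_projM]
  simp [Submodule.orthogonalProjection_mem_subspace_eq_self]
  exact congrArg (fun f => f y) U.isIdempotentElem_starProjection

lemma projM_psd (U : Submodule ℂ (EuclideanSpace ℂ (Fin n))) : (projM U).PosSemidef := by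
  have hsym := U.starProjection_isSymmetric
  rw [posSemidef_iff_dotProduct_mulVec]
  constructor
  · rw [Matrix.isHermitian_iff_isSymmetric, toE_projM]
    exact hsym
  · intro x
    rw [dot_eq_inner]
    set y := eE x with hy
    set Q := Matrix.toEuclideanLin (projM U) with hQ
    have hsymQ : Q.IsSymmetric := by rw [hQ, toE_projM]; exact hsym
    have h2 : Q (Q y) = Q y := by rw [hQ]; exact projM_idem U y
    have h1 : (inner ℂ y (Q y) : ℂ) = inner ℂ (Q y) (Q y) := by
      calc inner ℂ y (Q y) = inner ℂ y (Q (Q y)) := by rw [h2]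
        _ = inner ℂ (Q y) (Q y) := (hsymQ y (Q y)).symm
    rw [h1, inner_self_eq_norm_sq_to_K]
    norm_cast
    exact Complex.zero_le_real.mpr (sq_nonneg _)

lemma ker_toE_projM (U : Submodule ℂ (EuclideanSpace ℂ (Fin n))) :
    LinearMap.ker (Matrix.toEuclideanLin (projM U)) = Uᗮ := by
  ext x
  rw [LinearMap.mem_ker, toE_projM]
  constructor
  · intro h
    have : U.orthogonalProjection x = 0 := by
      apply Submodule.coe_eq_zero.mp
      exact h
    rw [← Submodule.ker_orthogonalProjection (K := U)]
    exact LinearMap.mem_ker.mpr this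
  · intro h
    have : U.orthogonalProjection x = 0 :=
      LinearMap.mem_ker.mp ((Submodule.ker_orthogonalProjection (K := U)) ▸ h)
    simp [this]

lemma projM_add (U : Submodule ℂ (EuclideanSpace ℂ (Fin n))) :
    projM U + projM Uᗮ = 1 := by
  apply Matrix.toEuclideanLin.injective
  apply LinearMap.ext
  intro x
  rw [map_add, LinearMap.add_apply, toE_projM, toE_projM]
  show (↑(U.orthogonalProjection x) + ↑(Uᗮ.orthogonalProjection x) : EuclideanSpace ℂ (Fin n))
    = Matrix.toEuclideanLin 1 x
  rw [show (↑(U.orthogonalProjection x) + ↑(Uᗮ.orthogonalProjection x) : EuclideanSpace ℂ (Fin n)) = x from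
    U.starProjection_add_starProjection_orthogonal x]
  show x = eE ((1 : Matrix (Fin n) (Fin n) ℂ).mulVec (eE.symm x))
  rw [Matrix.one_mulVec]
  simp

lemma psd_smul {c : ℝ} (hc : 0 ≤ c) {M : Matrix (Fin n) (Fin n) ℂ} (hM : M.PosSemidef) :
    ((c : ℂ) • M).PosSemidef := by
  rw [posSemidef_iff_dotProduct_mulVec]
  constructor
  · show ((c : ℂ) • M)ᴴ = (c : ℂ) • M
    rw [Matrix.conjTranspose_smul, hM.1.eq]
    congr 1
    simp [Complex.star_def, Complex.conj_ofReal]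
  · intro x
    rw [Matrix.smul_mulVec, dotProduct_smul]
    exact smul_nonneg (Complex.zero_le_real.mpr hc) ((posSemidef_iff_dotProduct_mulVec.mp hM).2 x)

lemma psd_sum {ι : Type*} (s : Finset ι) (f : ι → Matrix (Fin n) (Fin n) ℂ)
    (h : ∀ i ∈ s, (f i).PosSemidef) : (∑ i ∈ s, f i).PosSemidef := by
  classical
  induction s using Finset.induction_on with
  | empty => simpa using Matrix.PosSemidef.zero
  | @insert a s' hx ih =>
    rw [Finset.sum_insert hx]
    exact (h a (Finset.mem_insert_self a s')).add
      (ih fun i hi => h i (Finset.mem_insert_of_mem hi))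

end UDHelper

open UDHelper in
theorem stmt_14 {n m : ℕ}
    (ρ : Fin m → Matrix (Fin n) (Fin n) ℂ)
    (hρ : ∀ i, (ρ i).PosSemidef ∧ (ρ i).trace = 1)
    (ρhat ρtil : Fin m → Matrix (Fin n) (Fin n) ℂ)
    (hhat : ∀ i, (ρhat i).PosSemidef) (htil : ∀ i, (ρtil i).PosSemidef)
    (hdecomp : ∀ i, ρhat i + ρtil i = ρ i)
    (hsupphat : ∀ i, supp (ρhat i) =
      supp (ρ i) ⊓ ⨆ j ∈ Finset.univ \ {i}, supp (ρ j))
    (hsupptil : ∀ i, supp (ρtil i) ⊓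
      (supp (ρ i) ⊓ ⨆ j ∈ Finset.univ \ {i}, supp (ρ j)) = ⊥) :
    ((∃ E : Fin m → Matrix (Fin n) (Fin n) ℂ,
        (∀ i, (E i).PosSemidef) ∧ (1 - ∑ i, E i).PosSemidef ∧
        (∀ i j, i ≠ j → (E i * ρ j).trace = 0) ∧
        (∀ i, 0 < (E i * ρ i).trace.re)) ↔
      (∀ i, ρtil i ≠ 0)) ∧
    (∀ i, ρtil i ≠ 0 ↔ ¬ supp (ρ i) ≤ ⨆ j ∈ Finset.univ \ {i}, supp (ρ j)) := by
  classical
  set S : Fin m → Submodule ℂ (Fin n → ℂ) :=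
    fun i => ⨆ j ∈ Finset.univ \ {i}, supp (ρ j) with hS
  have key : ∀ i, ρtil i = 0 ↔ supp (ρ i) ≤ S i := by
    intro i
    constructor
    · intro h0
      have h1 : ρhat i = ρ i := by rw [← hdecomp i, h0, add_zero]
      have h2 := hsupphat i
      rw [h1] at h2
      rw [h2]
      exact inf_le_right
    · intro hle
      have h1 : supp (ρtil i) ≤ supp (ρ i) := by
        have h2 := le_supp_add (hhat i) (htil i)
        rwa [hdecomp i] at h2
      have h3 : supp (ρtil i) ≤ supp (ρ i) ⊓ S i := le_inf h1 (le_trans h1 hle)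
      have h4 : supp (ρtil i) = ⊥ := by
        rw [← hsupptil i]
        exact (inf_eq_left.mpr h3).symm
      exact supp_eq_bot.mp h4
  have part2 : ∀ i, ρtil i ≠ 0 ↔ ¬ supp (ρ i) ≤ S i := fun i => not_congr (key i)
  refine ⟨⟨?_, ?_⟩, part2⟩
  · -- existence → cores nonzero
    rintro ⟨E, hE1, _, hE3, hE4⟩ i
    rw [part2 i]
    intro hle
    have hker : mE (S i) ≤ LinearMap.ker (Matrix.toEuclideanLin (E i)) := by
      rw [hS]
      simp only []
      rw [mE_biSup]
      refine iSup₂_le fun j hj => ?_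
      rw [mE_supp]
      apply range_le_ker_of_mul_eq_zero
      apply (trace_psd_mul (hE1 i) (hρ j).1).2
      have hji : j ≠ i := by
        have := Finset.mem_sdiff.mp hj
        simpa using this.2
      exact hE3 i j hji.symm
    have hEρ : E i * ρ i = 0 := by
      apply mul_eq_zero_of_range_le_ker
      rw [← mE_supp]
      exact le_trans (mE_mono hle) hker
    have h4 := hE4 i
    rw [hEρ] at h4
    simp at h4
  · -- cores nonzero → existence
    intro htl
    rcases Nat.eq_zero_or_pos m with hm | hm
    · subst hm
      refine ⟨fun i => 0, fun i => i.elim0, ?_, fun i => i.elim0, fun i => i.elim0⟩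
      simpa using Matrix.PosSemidef.one
    · set c : ℝ := (m : ℝ)⁻¹ with hc
      have hc0 : 0 < c := by
        rw [hc]
        exact inv_pos.mpr (by exact_mod_cast hm)
      set U : Fin m → Submodule ℂ (EuclideanSpace ℂ (Fin n)) :=
        fun i => (mE (S i))ᗮ with hU
      have hkerP : ∀ i, LinearMap.ker (Matrix.toEuclideanLin (projM (U i))) = mE (S i) := by
        intro i
        rw [ker_toE_projM, hU]
        simp only []
        rw [Submodule.orthogonal_orthogonal]
      have hPzero : ∀ i j, j ≠ i → projM (U i) * ρ j = 0 := by
        intro i j hji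
        apply mul_eq_zero_of_range_le_ker
        rw [← mE_supp, hkerP i]
        apply mE_mono
        rw [hS]
        exact le_biSup (fun j => supp (ρ j)) (Finset.mem_sdiff.mpr ⟨Finset.mem_univ j, by simpa using hji⟩)
      refine ⟨fun i => (c : ℂ) • projM (U i), ?_, ?_, ?_, ?_⟩
      · intro i
        exact psd_smul hc0.le (projM_psd _)
      · have hsum : (1 : Matrix (Fin n) (Fin n) ℂ) - ∑ i, (c:ℂ) • projM (U i)
            = ∑ i : Fin m, (c:ℂ) • (1 - projM (U i)) := by
          simp only [smul_sub, Finset.sum_sub_distrib]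
          congr 1
          rw [Finset.sum_const, Finset.card_univ, Fintype.card_fin,
            ← Nat.cast_smul_eq_nsmul ℂ, smul_smul]
          have hmc : (m : ℂ) * (c : ℂ) = 1 := by
            rw [hc]
            push_cast
            exact mul_inv_cancel₀ (by exact_mod_cast hm.ne')
          rw [hmc, one_smul]
        rw [hsum]
        apply psd_sum
        intro i _
        apply psd_smul hc0.le
        have h1 : (1 : Matrix (Fin n) (Fin n) ℂ) - projM (U i) = projM (U i)ᗮ := by
          rw [← projM_add (U i)]
          exact add_sub_cancel_left _ _
        rw [h1]
        exact projM_psd _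
      · intro i j hij
        rw [Matrix.smul_mul, hPzero i j hij.symm]
        simp
      · intro i
        rw [Matrix.smul_mul, Matrix.trace_smul]
        set t : ℂ := (projM (U i) * ρ i).trace with ht
        have ht0 : 0 ≤ t := (trace_psd_mul (projM_psd _) (hρ i).1).1
        have htne : t ≠ 0 := by
          intro h0
          have hP0 := (trace_psd_mul (projM_psd _) (hρ i).1).2 h0
          have hle : supp (ρ i) ≤ S i := by
            rw [← mE_le_mE, mE_supp, ← hkerP i]
            exact range_le_ker_of_mul_eq_zero hP0
          exact (part2 i).mp (htl i) hle
        have hre := pos_re_of_nonneg_ne_zero ht0 htne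
        have : ((c : ℂ) • t).re = c * t.re := by
          simp [Complex.smul_re]
        rw [this]
        exact mul_pos hc0 hre
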